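/- Let Δ be a φ-saturated set of modal formulas in the logic S4 generated by H_S4, and define v_Δ from formulas to {0,1,2} by: v_Δ(α) = 2 if □α ∈ Δ; v_Δ(α) = 1 if □α ∉ Δ but α ∈ Δ; v_Δ(α) = 0 if □α ∉ Δ and α ∉ Δ. Then v_Δ is a valuation over the Nmatrix M'_S4. -/

import Mathlib

/-- Modal formulas over signature Σ = {¬, □, →, ∨, ∧}. -/
inductive MF
  | var : ℕ → MF
  | neg : MF → MF
  | box : MF → MF
  | imp : MF → MF → MF
  | dis : MF → MF → MF
  | con : MF → MF → MF
deriving DecidableEq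

/-- The three truth values 0, 1, 2. -/
inductive V3
  | z | o | t
deriving DecidableEq

/-- Designated values D = {1, 2}. -/
def Des : Set V3 := {V3.o, V3.t}

def negOp : V3 → Set V3
  | .z => {.o, .t}
  | .o => {.z}
  | .t => {.z}

def boxOp : V3 → Set V3
  | .z => {.z}
  | .o => {.z}
  | .t => {.t}

def impOp : V3 → V3 → Set V3
  | .z, .z => {.o, .t}
  | .z, .o => {.o, .t}
  | .z, .t => {.t}
  | .o, .z => {.z}
  | .o, .o => {.o, .t}
  | .o, .t => {.t}
  | .t, .z => {.z}
  | .t, .o => {.o}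
  | .t, .t => {.t}

def disOp : V3 → V3 → Set V3
  | .z, .z => {.z}
  | .z, .o => {.o, .t}
  | .o, .z => {.o, .t}
  | .o, .o => {.o, .t}
  | _, _ => {.t}

def conOp : V3 → V3 → Set V3
  | .z, _ => {.z}
  | _, .z => {.z}
  | .t, .t => {.t}
  | _, _ => {.o}

/-- Valuations over the reduced Nmatrix M'_S4. -/
def IsVal (v : MF → V3) : Prop :=
  (∀ α, v (.neg α) ∈ negOp (v α)) ∧
  (∀ α, v (.box α) ∈ boxOp (v α)) ∧
  (∀ α β, v (.imp α β) ∈ impOp (v α) (v β)) ∧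
  (∀ α β, v (.dis α β) ∈ disOp (v α) (v β)) ∧
  (∀ α β, v (.con α β) ∈ conOp (v α) (v β))

/-- The levels L_k. -/
def LevelS4 : ℕ → Set (MF → V3)
  | 0 => {v | IsVal v}
  | (k+1) => {v ∈ LevelS4 k | ∀ α, (∀ w ∈ LevelS4 k, w α ∈ Des) → v α = V3.t}

/-- Level valuations L'_S4 = ⋂_{k ≥ 0} L_k. -/
def LVS4 : Set (MF → V3) := ⋂ k, LevelS4 k

/-- Theorems of the Hilbert calculus H_S4 : classical propositional axioms over
{¬,→,∨,∧}, plus K, T, 4, with modus ponens and necessitation. -/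
inductive S4Thm : MF → Prop
  | ax1 (α β : MF) : S4Thm (α.imp (β.imp α))
  | ax2 (α β γ : MF) : S4Thm ((α.imp (β.imp γ)).imp ((α.imp β).imp (α.imp γ)))
  | ax3 (α β : MF) : S4Thm (α.imp (β.imp (α.con β)))
  | ax4 (α β : MF) : S4Thm ((α.con β).imp α)
  | ax5 (α β : MF) : S4Thm ((α.con β).imp β)
  | ax6 (α β : MF) : S4Thm (α.imp (α.dis β))
  | ax7 (α β : MF) : S4Thm (β.imp (α.dis β))
  | ax8 (α β γ : MF) : S4Thm ((α.imp γ).imp ((β.imp γ).imp ((α.dis β).imp γ)))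
  | ax9 (α β : MF) : S4Thm ((β.imp α).imp ((β.imp α.neg).imp β.neg))
  | ax10 (α β : MF) : S4Thm (α.imp (α.neg.imp β))
  | dne (α : MF) : S4Thm (α.neg.neg.imp α)
  | axK (α β : MF) : S4Thm ((α.imp β).box.imp (α.box.imp β.box))
  | axT (α : MF) : S4Thm (α.box.imp α)
  | axFour (α : MF) : S4Thm (α.box.imp α.box.box)
  | mp {α β : MF} : S4Thm (α.imp β) → S4Thm α → S4Thm β
  | nec {α : MF} : S4Thm α → S4Thm α.box

/-- Γ ⊢_S4 φ : either φ is a theorem, or some β₁,…,βₙ ∈ Γ (n ≥ 1) give a theorem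
β₁ → (β₂ → (… → (βₙ → φ)…)). -/
def S4Deriv (Γ : Set MF) (φ : MF) : Prop :=
  S4Thm φ ∨ ∃ l : List MF, l ≠ [] ∧ (∀ β ∈ l, β ∈ Γ) ∧ S4Thm (l.foldr MF.imp φ)

/-- Δ is φ-saturated (w.r.t. ⊢_S4). -/
def SatS4 (Δ : Set MF) (φ : MF) : Prop :=
  ¬ S4Deriv Δ φ ∧ ∀ α ∉ Δ, S4Deriv (insert α Δ) φ

open Classical in
/-- The canonical function v_Δ. -/
noncomputable def vDeltaS4 (Δ : Set MF) : MF → V3 :=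
  fun α => if MF.box α ∈ Δ then V3.t else if α ∈ Δ then V3.o else V3.z

/-- Λ is closed under (immediate, hence all) subformulas. -/
def SubClosed (Λ : Set MF) : Prop :=
  (∀ α, MF.neg α ∈ Λ → α ∈ Λ) ∧
  (∀ α, MF.box α ∈ Λ → α ∈ Λ) ∧
  (∀ α β, MF.imp α β ∈ Λ → α ∈ Λ ∧ β ∈ Λ) ∧
  (∀ α β, MF.dis α β ∈ Λ → α ∈ Λ ∧ β ∈ Λ) ∧
  (∀ α β, MF.con α β ∈ Λ → α ∈ Λ ∧ β ∈ Λ)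

/-- Partial valuations with domain Λ (modelled as total functions constrained on Λ). -/
def IsPVal (Λ : Set MF) (v : MF → V3) : Prop :=
  (∀ α, MF.neg α ∈ Λ → v (.neg α) ∈ negOp (v α)) ∧
  (∀ α, MF.box α ∈ Λ → v (.box α) ∈ boxOp (v α)) ∧
  (∀ α β, MF.imp α β ∈ Λ → v (.imp α β) ∈ impOp (v α) (v β)) ∧
  (∀ α β, MF.dis α β ∈ Λ → v (.dis α β) ∈ disOp (v α) (v β)) ∧
  (∀ α β, MF.con α β ∈ Λ → v (.con α β) ∈ conOp (v α) (v β))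

/-- PLV'(Λ): partial' level valuations over Λ (witnesses amongst level valuations). -/
def PLV' (Λ : Set MF) : Set (MF → V3) :=
  {v | IsPVal Λ v ∧ ∀ α ∈ Λ, v α = V3.o →
    ∃ w ∈ LVS4, w α = V3.z ∧ ∀ β ∈ Λ, v β = V3.t → w β = V3.t}

/-- PLV(Λ): partial level valuations over Λ, defined as the largest subset of
PV(Λ) whose condition is witnessed inside itself. -/
def PLV (Λ : Set MF) : Set (MF → V3) :=
  ⋃₀ {S | (∀ v ∈ S, IsPVal Λ v) ∧
      ∀ v ∈ S, ∀ α ∈ Λ, v α = V3.o →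
        ∃ w ∈ S, w α = V3.z ∧ ∀ β ∈ Λ, v β = V3.t → w β = V3.t}

/-- Set of subformulas of a modal formula. -/
def MF.subf : MF → Finset MF
  | .var n => {.var n}
  | .neg α => insert (.neg α) α.subf
  | .box α => insert (.box α) α.subf
  | .imp α β => insert (.imp α β) (α.subf ∪ β.subf)
  | .dis α β => insert (.dis α β) (α.subf ∪ β.subf)
  | .con α β => insert (.con α β) (α.subf ∪ β.subf)


/-!
A φ-saturated set is a prime theory: it is closed under `⊢_S4` (if `Δ ⊢ α` with
`α ∉ Δ`, saturation and the deduction theorem give `Δ ⊢ φ`), and it contains exactly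
one of `α`, `¬α`. So membership in `Δ` commutes with `¬, →, ∨, ∧` as in classical logic,
while by K, T and 4 the set of `α` with `□α ∈ Δ` lies inside `Δ`, is closed under `□`
and `∧`, and contains `α ∨ β` (resp. `α → β`) as soon as it contains `α` or `β`
(resp. `β`). These are exactly the constraints the multioperations of `M'_S4` put
on `v_Δ`.
-/

namespace S4Thm

theorem imp_self (α : MF) : S4Thm (α.imp α) :=
  ((ax2 α (α.imp α) α).mp (ax1 α (α.imp α))).mp (ax1 α α)

theorem weaken {β : MF} (α : MF) (h : S4Thm β) : S4Thm (α.imp β) := (ax1 β α).mp h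

theorem imp_trans {α β γ : MF} (h₁ : S4Thm (α.imp β)) (h₂ : S4Thm (β.imp γ)) :
    S4Thm (α.imp γ) :=
  ((ax2 α β γ).mp (weaken α h₂)).mp h₁

theorem imp_mono_right {α β : MF} (γ : MF) (h : S4Thm (α.imp β)) :
    S4Thm ((γ.imp α).imp (γ.imp β)) :=
  (ax2 γ α β).mp (weaken γ h)

theorem box_mono {α β : MF} (h : S4Thm (α.imp β)) : S4Thm (α.box.imp β.box) :=
  (axK α β).mp (nec h)

theorem foldr_imp_of {γ : MF} (h : S4Thm γ) : ∀ l : List MF, S4Thm (l.foldr MF.imp γ)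
  | [] => h
  | x :: l => weaken x (foldr_imp_of h l)

theorem imp_foldr_imp (γ : MF) : ∀ l : List MF, S4Thm (γ.imp (l.foldr MF.imp γ))
  | [] => imp_self γ
  | x :: l => imp_trans (imp_foldr_imp γ l) (ax1 _ x)

theorem foldr_imp_distrib (γ δ : MF) : ∀ l : List MF,
    S4Thm ((l.foldr MF.imp (γ.imp δ)).imp ((l.foldr MF.imp γ).imp (l.foldr MF.imp δ)))
  | [] => imp_self _
  | x :: l => imp_trans (imp_mono_right x (foldr_imp_distrib γ δ l)) (ax2 x _ _)

theorem foldr_imp_mp {γ δ : MF} {l : List MF} (h₁ : S4Thm (l.foldr MF.imp (γ.imp δ)))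
    (h₂ : S4Thm (l.foldr MF.imp γ)) : S4Thm (l.foldr MF.imp δ) :=
  ((foldr_imp_distrib γ δ l).mp h₁).mp h₂

end S4Thm

/-- Derivability in `H_S4` from hypotheses in `Γ`; necessitation applies only to theorems. -/
inductive S4Derivable (Γ : Set MF) : MF → Prop
  | hyp {α : MF} : α ∈ Γ → S4Derivable Γ α
  | thm {α : MF} : S4Thm α → S4Derivable Γ α
  | mp {α β : MF} : S4Derivable Γ (α.imp β) → S4Derivable Γ α → S4Derivable Γ β

namespace S4Derivable

variable {Γ : Set MF}

theorem mono {Γ' : Set MF} {α : MF} (hs : Γ ⊆ Γ') (h : S4Derivable Γ α) :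
    S4Derivable Γ' α := by
  induction h with
  | hyp h => exact hyp (hs h)
  | thm h => exact thm h
  | mp _ _ ih₁ ih₂ => exact ih₁.mp ih₂

theorem imp_intro {α β : MF} (h : S4Derivable (insert α Γ) β) :
    S4Derivable Γ (α.imp β) := by
  induction h with
  | @hyp γ hγ =>
    rcases hγ with rfl | hγ
    · exact thm (S4Thm.imp_self γ)
    · exact (thm (S4Thm.ax1 γ α)).mp (hyp hγ)
  | thm h => exact thm (S4Thm.weaken α h)
  | @mp γ δ _ _ ih₁ ih₂ => exact ((thm (S4Thm.ax2 α γ δ)).mp ih₁).mp ih₂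

theorem of_foldr_imp {φ : MF} :
    ∀ l : List MF, (∀ β ∈ l, β ∈ Γ) → S4Derivable Γ (l.foldr MF.imp φ) →
      S4Derivable Γ φ
  | [], _, h => h
  | x :: l, hl, h =>
    of_foldr_imp l (fun β hβ => hl β (List.mem_cons_of_mem x hβ))
      (h.mp (hyp (hl x List.mem_cons_self)))

theorem exists_foldr_imp {φ : MF} (h : S4Derivable Γ φ) :
    ∃ l : List MF, (∀ β ∈ l, β ∈ Γ) ∧ S4Thm (l.foldr MF.imp φ) := by
  induction h with
  | @hyp α hα => exact ⟨[α], by simpa using hα, S4Thm.imp_self α⟩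
  | thm h => exact ⟨[], by simp, h⟩
  | @mp α β _ _ ih₁ ih₂ =>
    obtain ⟨l₁, hl₁, h₁⟩ := ih₁
    obtain ⟨l₂, hl₂, h₂⟩ := ih₂
    refine ⟨l₁ ++ l₂, fun γ hγ => (List.mem_append.mp hγ).elim (hl₁ γ) (hl₂ γ), ?_⟩
    have hαβ : S4Thm ((l₁ ++ l₂).foldr MF.imp (α.imp β)) := by
      rw [List.foldr_append]
      exact S4Thm.foldr_imp_mp (S4Thm.foldr_imp_of (S4Thm.imp_foldr_imp _ l₂) l₁) h₁
    have hα : S4Thm ((l₁ ++ l₂).foldr MF.imp α) := by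
      rw [List.foldr_append]
      exact S4Thm.foldr_imp_of h₂ l₁
    exact S4Thm.foldr_imp_mp hαβ hα

theorem neg_intro {α β : MF} (h₁ : S4Derivable Γ (α.imp β))
    (h₂ : S4Derivable Γ (α.imp β.neg)) :
    S4Derivable Γ α.neg :=
  ((thm (S4Thm.ax9 β α)).mp h₁).mp h₂

theorem of_imp_of_neg_imp {α φ : MF} (h₁ : S4Derivable Γ (α.imp φ))
    (h₂ : S4Derivable Γ (α.neg.imp φ)) : S4Derivable Γ φ := by
  -- under `¬φ`, contraposing both hypotheses gives `¬α` and `¬¬α`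
  have hnφ : ∀ β : MF, S4Derivable (insert φ.neg Γ) (β.imp φ.neg) := fun β =>
    (thm (S4Thm.ax1 φ.neg β)).mp (hyp (Set.mem_insert _ _))
  have hnα : S4Derivable (insert φ.neg Γ) α.neg :=
    neg_intro (h₁.mono (Set.subset_insert _ _)) (hnφ α)
  have hnnα : S4Derivable (insert φ.neg Γ) α.neg.neg :=
    neg_intro (h₂.mono (Set.subset_insert _ _)) (hnφ α.neg)
  have hφ : S4Derivable Γ (φ.neg.imp φ) :=
    imp_intro (((thm (S4Thm.ax10 α.neg φ)).mp hnα).mp hnnα)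
  exact (thm (S4Thm.dne φ)).mp (neg_intro hφ (thm (S4Thm.imp_self φ.neg)))

end S4Derivable

theorem s4Deriv_iff_s4Derivable {Γ : Set MF} {φ : MF} : S4Deriv Γ φ ↔ S4Derivable Γ φ := by
  constructor
  · rintro (h | ⟨l, -, hl, h⟩)
    exacts [.thm h, .of_foldr_imp l hl (.thm h)]
  · intro h
    obtain ⟨l, hl, h⟩ := h.exists_foldr_imp
    rcases eq_or_ne l [] with rfl | hne
    exacts [Or.inl h, Or.inr ⟨l, hne, hl, h⟩]

namespace SatS4

variable {Δ : Set MF} {φ : MF} {α β : MF}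

theorem not_derivable (h : SatS4 Δ φ) : ¬ S4Derivable Δ φ :=
  s4Deriv_iff_s4Derivable.not.mp h.1

theorem derivable_imp_of_notMem (h : SatS4 Δ φ) (hα : α ∉ Δ) : S4Derivable Δ (α.imp φ) :=
  S4Derivable.imp_intro (s4Deriv_iff_s4Derivable.mp (h.2 α hα))

theorem mem_of_derivable (h : SatS4 Δ φ) (d : S4Derivable Δ α) : α ∈ Δ :=
  by_contra fun hα => h.not_derivable ((h.derivable_imp_of_notMem hα).mp d)

theorem mem_of_thm (h : SatS4 Δ φ) (hα : S4Thm α) : α ∈ Δ :=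
  h.mem_of_derivable (.thm hα)

theorem mem_of_imp_mem (h : SatS4 Δ φ) (hαβ : α.imp β ∈ Δ) (hα : α ∈ Δ) : β ∈ Δ :=
  h.mem_of_derivable ((S4Derivable.hyp hαβ).mp (.hyp hα))

theorem mem_of_thm_imp (h : SatS4 Δ φ) (hαβ : S4Thm (α.imp β)) (hα : α ∈ Δ) :
    β ∈ Δ :=
  h.mem_of_imp_mem (h.mem_of_thm hαβ) hα

theorem neg_mem_iff (h : SatS4 Δ φ) : α.neg ∈ Δ ↔ α ∉ Δ := by
  refine ⟨fun hnα hα => h.not_derivable ?_, fun hα => ?_⟩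
  · exact ((S4Derivable.thm (S4Thm.ax10 α φ)).mp (.hyp hα)).mp (.hyp hnα)
  · exact by_contra fun hnα => h.not_derivable <| S4Derivable.of_imp_of_neg_imp
      (h.derivable_imp_of_notMem hα) (h.derivable_imp_of_notMem hnα)

theorem imp_mem_iff (h : SatS4 Δ φ) : α.imp β ∈ Δ ↔ (α ∈ Δ → β ∈ Δ) := by
  refine ⟨h.mem_of_imp_mem, fun hαβ => ?_⟩
  by_cases hα : α ∈ Δ
  · exact h.mem_of_thm_imp (S4Thm.ax1 β α) (hαβ hα)
  · have hnα : α.neg ∈ Δ := h.neg_mem_iff.mpr hα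
    refine h.mem_of_derivable (S4Derivable.imp_intro ?_)
    exact ((S4Derivable.thm (S4Thm.ax10 α β)).mp (.hyp (Set.mem_insert _ _))).mp
      (.hyp (Set.mem_insert_of_mem _ hnα))

theorem dis_mem_iff (h : SatS4 Δ φ) : α.dis β ∈ Δ ↔ α ∈ Δ ∨ β ∈ Δ := by
  refine ⟨fun hαβ => or_iff_not_imp_left.mpr fun hα => ?_, ?_⟩
  · have hαβ' : α.imp β ∈ Δ := h.imp_mem_iff.mpr fun hα' => (hα hα').elim
    have hcases := h.mem_of_thm_imp (S4Thm.ax8 α β β) hαβ'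
    exact h.mem_of_imp_mem (h.mem_of_imp_mem hcases (h.mem_of_thm (S4Thm.imp_self β))) hαβ
  · rintro (hα | hβ)
    exacts [h.mem_of_thm_imp (S4Thm.ax6 α β) hα, h.mem_of_thm_imp (S4Thm.ax7 α β) hβ]

theorem con_mem_iff (h : SatS4 Δ φ) : α.con β ∈ Δ ↔ α ∈ Δ ∧ β ∈ Δ :=
  ⟨fun hαβ => ⟨h.mem_of_thm_imp (S4Thm.ax4 α β) hαβ,
      h.mem_of_thm_imp (S4Thm.ax5 α β) hαβ⟩,
    fun ⟨hα, hβ⟩ => h.mem_of_imp_mem (h.mem_of_thm_imp (S4Thm.ax3 α β) hα) hβ⟩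

theorem mem_of_box_mem (h : SatS4 Δ φ) (hα : α.box ∈ Δ) : α ∈ Δ :=
  h.mem_of_thm_imp (S4Thm.axT α) hα

theorem box_box_mem_iff (h : SatS4 Δ φ) : α.box.box ∈ Δ ↔ α.box ∈ Δ :=
  ⟨h.mem_of_box_mem, h.mem_of_thm_imp (S4Thm.axFour α)⟩

theorem box_mem_of_thm_imp (h : SatS4 Δ φ) (hαβ : S4Thm (α.imp β)) (hα : α.box ∈ Δ) :
    β.box ∈ Δ :=
  h.mem_of_thm_imp (S4Thm.box_mono hαβ) hα

theorem box_mem_of_box_imp_mem (h : SatS4 Δ φ) (hαβ : (α.imp β).box ∈ Δ)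
    (hα : α.box ∈ Δ) : β.box ∈ Δ :=
  h.mem_of_imp_mem (h.mem_of_thm_imp (S4Thm.axK α β) hαβ) hα

theorem box_con_mem_iff (h : SatS4 Δ φ) :
    (α.con β).box ∈ Δ ↔ α.box ∈ Δ ∧ β.box ∈ Δ :=
  ⟨fun hαβ => ⟨h.box_mem_of_thm_imp (S4Thm.ax4 α β) hαβ,
      h.box_mem_of_thm_imp (S4Thm.ax5 α β) hαβ⟩,
    fun ⟨hα, hβ⟩ =>
      h.box_mem_of_box_imp_mem (h.box_mem_of_thm_imp (S4Thm.ax3 α β) hα) hβ⟩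

theorem vDeltaS4_neg_mem (h : SatS4 Δ φ) (α : MF) :
    vDeltaS4 Δ α.neg ∈ negOp (vDeltaS4 Δ α) := by
  have := h.neg_mem_iff (α := α)
  have := h.mem_of_box_mem (α := α)
  have := h.mem_of_box_mem (α := α.neg)
  unfold vDeltaS4
  split_ifs <;> simp_all [negOp]

theorem vDeltaS4_box_mem (h : SatS4 Δ φ) (α : MF) :
    vDeltaS4 Δ α.box ∈ boxOp (vDeltaS4 Δ α) := by
  have := h.box_box_mem_iff (α := α)
  unfold vDeltaS4
  split_ifs <;> simp_all [boxOp]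

theorem vDeltaS4_imp_mem (h : SatS4 Δ φ) (α β : MF) :
    vDeltaS4 Δ (α.imp β) ∈ impOp (vDeltaS4 Δ α) (vDeltaS4 Δ β) := by
  have := h.imp_mem_iff (α := α) (β := β)
  have := h.box_mem_of_box_imp_mem (α := α) (β := β)
  have := h.box_mem_of_thm_imp (S4Thm.ax1 β α)
  have := h.mem_of_box_mem (α := α)
  have := h.mem_of_box_mem (α := β)
  have := h.mem_of_box_mem (α := α.imp β)
  unfold vDeltaS4
  split_ifs <;> simp_all [impOp]

theorem vDeltaS4_dis_mem (h : SatS4 Δ φ) (α β : MF) :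
    vDeltaS4 Δ (α.dis β) ∈ disOp (vDeltaS4 Δ α) (vDeltaS4 Δ β) := by
  have := h.dis_mem_iff (α := α) (β := β)
  have := h.box_mem_of_thm_imp (S4Thm.ax6 α β)
  have := h.box_mem_of_thm_imp (S4Thm.ax7 α β)
  have := h.mem_of_box_mem (α := α)
  have := h.mem_of_box_mem (α := β)
  have := h.mem_of_box_mem (α := α.dis β)
  unfold vDeltaS4
  split_ifs <;> simp_all [disOp]

theorem vDeltaS4_con_mem (h : SatS4 Δ φ) (α β : MF) :
    vDeltaS4 Δ (α.con β) ∈ conOp (vDeltaS4 Δ α) (vDeltaS4 Δ β) := by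
  have := h.con_mem_iff (α := α) (β := β)
  have := h.box_con_mem_iff (α := α) (β := β)
  have := h.mem_of_box_mem (α := α)
  have := h.mem_of_box_mem (α := β)
  unfold vDeltaS4
  split_ifs <;> simp_all [conOp]

end SatS4

/-- the canonical function v_Δ of a φ-saturated set Δ in S4 is a
valuation over the Nmatrix M'_S4. -/
theorem vDelta_is_valuation (Δ : Set MF) (φ : MF) (h : SatS4 Δ φ) :
    IsVal (vDeltaS4 Δ) :=
  ⟨h.vDeltaS4_neg_mem, h.vDeltaS4_box_mem, h.vDeltaS4_imp_mem, h.vDeltaS4_dis_mem,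
    h.vDeltaS4_con_mem⟩
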